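/- arXiv:2510.21035 — 4 statements merged into one kernel-verified Lean document; each statement's English description precedes it below -/
import Mathlib

section
/- Let (Q₀, β₀) and (Q₁, β₁) be global G-actions on sets, with Q₁ = ⋃_{g∈G} β₁ᵍ(Γ₁) for a subset Γ₁ ⊆ Q₁ equipped with source and target maps s, t : Γ₁ → Γ₀ ⊆ Q₀ that are G-equivariant on overlaps (i.e., if x, z ∈ Γ₁ and β₁ᵍ(x) = β₁ʰ(z), then β₀ᵍ(s(x)) = β₀ʰ(s(z)) and β₀ᵍ(t(x)) = β₀ʰ(t(z))). Then the maps o, t : Q₁ → Q₀ defined by o(β₁ᵍ(a)) = β₀ᵍ(s(a)) and t(β₁ᵍ(a)) = β₀ᵍ(t(a)) for a ∈ Γ₁ are well defined. -/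
/-- Well-definedness of the source and target maps on the enveloping quiver: if every
element of `Y1` has the form `g • x` with `x ∈ Γ1`, and the given source and target maps
`s, t : Γ1 → Y0` are `G`-equivariant on overlaps, then there are maps `o, t' : Y1 → Y0`
with `o (g • a) = g • s a` and `t' (g • a) = g • t a` for all `a ∈ Γ1`. -/
theorem stmt4 (G Y0 Y1 : Type) [Group G] [MulAction G Y0] [MulAction G Y1]
    (Γ1 : Set Y1) (s t : Y1 → Y0)
    (hcover : ∀ y : Y1, ∃ g : G, ∃ x ∈ Γ1, y = g • x)
    (hs : ∀ g h : G, ∀ x ∈ Γ1, ∀ z ∈ Γ1, g • x = h • z → g • s x = h • s z)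
    (ht : ∀ g h : G, ∀ x ∈ Γ1, ∀ z ∈ Γ1, g • x = h • z → g • t x = h • t z) :
    (∃ o : Y1 → Y0, ∀ g : G, ∀ a ∈ Γ1, o (g • a) = g • s a) ∧
    (∃ t' : Y1 → Y0, ∀ g : G, ∀ a ∈ Γ1, t' (g • a) = g • t a) := by
  constructor
  · refine ⟨fun y => (hcover y).choose • s (hcover y).choose_spec.choose, ?_⟩
    intro g a ha
    obtain ⟨hx, hy⟩ := (hcover (g • a)).choose_spec.choose_spec
    exact (hs _ g _ hx a ha hy.symm)
  · refine ⟨fun y => (hcover y).choose • t (hcover y).choose_spec.choose, ?_⟩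
    intro g a ha
    obtain ⟨hx, hy⟩ := (hcover (g • a)).choose_spec.choose_spec
    exact (ht _ g _ hx a ha hy.symm)
end

section
/- Every partial action α of a group G on a quiver Γ admits an enveloping action: there exists a quiver Q with a global G-action β such that Γ is included as a subquiver of Q, α is the restriction of β to Γ, (Q₀, β₀) is the set-theoretic enveloping action of (Γ₀, α₀), and (Q₁, β₁) is the set-theoretic enveloping action of (Γ₁, α₁). -/
structure Quiv where
  V : Type
  E : Type
  s : E → V
  t : E → V

structure QuivHom (Γ Q : Quiv) where
  onV : Γ.V → Q.V
  onE : Γ.E → Q.E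
  map_s : ∀ e, Q.s (onE e) = onV (Γ.s e)
  map_t : ∀ e, Q.t (onE e) = onV (Γ.t e)

/-- A set-theoretic partial action of a group `G` on a set `X`: a family of
subsets `dom g` together with maps `act g` restricting to bijections
`dom g⁻¹ → dom g`, satisfying the partial action axioms. -/
structure SetPA (G : Type) [Group G] (X : Type) where
  dom : G → Set X
  act : G → X → X
  dom_one : dom 1 = Set.univ
  act_one : act 1 = id
  bijOn : ∀ g, Set.BijOn (act g) (dom g⁻¹) (dom g)
  image_inter : ∀ g h, act g '' (dom g⁻¹ ∩ dom h) = dom g ∩ dom (g * h)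
  compat : ∀ g h x, x ∈ act h⁻¹ '' (dom h ∩ dom g⁻¹) → act g (act h x) = act (g * h) x

/-- A partial action of a group `G` on a quiver `Γ`: set-theoretic partial actions on
vertices and on arrows, such that sources and targets of arrows in the domain subquivers
lie in the vertex domains, and the partial bijections commute with source and target. -/
structure QuivPA (G : Type) [Group G] (Γ : Quiv) where
  va : SetPA G Γ.V
  ea : SetPA G Γ.E
  mem_s : ∀ g e, e ∈ ea.dom g → Γ.s e ∈ va.dom g
  mem_t : ∀ g e, e ∈ ea.dom g → Γ.t e ∈ va.dom g
  act_s : ∀ g e, e ∈ ea.dom g⁻¹ → Γ.s (ea.act g e) = va.act g (Γ.s e)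
  act_t : ∀ g e, e ∈ ea.dom g⁻¹ → Γ.t (ea.act g e) = va.act g (Γ.t e)

/-- A global action of a group `G` on a quiver `Q` by quiver automorphisms. -/
structure QuivGA (G : Type) [Group G] (Q : Quiv) where
  actV : G → Q.V ≃ Q.V
  actE : G → Q.E ≃ Q.E
  actV_one : actV 1 = Equiv.refl _
  actE_one : actE 1 = Equiv.refl _
  actV_mul : ∀ g h, actV (g * h) = (actV h).trans (actV g)
  actE_mul : ∀ g h, actE (g * h) = (actE h).trans (actE g)
  act_s : ∀ g e, Q.s (actE g e) = actV g (Q.s e)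
  act_t : ∀ g e, Q.t (actE g e) = actV g (Q.t e)

/-- `(Q, β)` together with the inclusion `i : Γ → Q` is an enveloping action of the
partial action `pa` of `G` on `Γ`: `i` is an inclusion of quivers, `pa` is the
restriction of `β` along `i`, and on vertices and arrows `β` is the set-theoretic
enveloping action (`Q₀ = ⋃ β_g(Γ₀)`, `Q₁ = ⋃ β_g(Γ₁)`). -/
def IsEnvelopingQ {G : Type} [Group G] {Γ Q : Quiv} (pa : QuivPA G Γ)
    (β : QuivGA G Q) (i : QuivHom Γ Q) : Prop :=
  Function.Injective i.onV ∧ Function.Injective i.onE ∧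
  (∀ g, i.onV '' pa.va.dom g = ⇑(β.actV g) '' Set.range i.onV ∩ Set.range i.onV) ∧
  (∀ g, i.onE '' pa.ea.dom g = ⇑(β.actE g) '' Set.range i.onE ∩ Set.range i.onE) ∧
  (∀ g x, x ∈ pa.va.dom g⁻¹ → i.onV (pa.va.act g x) = β.actV g (i.onV x)) ∧
  (∀ g e, e ∈ pa.ea.dom g⁻¹ → i.onE (pa.ea.act g e) = β.actE g (i.onE e)) ∧
  (⋃ g : G, ⇑(β.actV g) '' Set.range i.onV) = Set.univ ∧
  (⋃ g : G, ⇑(β.actE g) '' Set.range i.onE) = Set.univ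

namespace EnvAux

variable {G : Type} [Group G] {X : Type}

lemma image_dom (p : SetPA G X) (g : G) : p.act g '' p.dom g⁻¹ = p.dom g :=
  (p.bijOn g).image_eq

lemma act_act_inv (p : SetPA G X) {g : G} {x : X} (hx : x ∈ p.dom g) :
    p.act g (p.act g⁻¹ x) = x := by
  have hmem : x ∈ p.act (g⁻¹)⁻¹ '' (p.dom g⁻¹ ∩ p.dom g⁻¹) := by
    rw [inv_inv, Set.inter_self, image_dom]; exact hx
  have h := p.compat g g⁻¹ x hmem
  rwa [mul_inv_cancel, p.act_one, id_eq] at h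

lemma act_inv_act (p : SetPA G X) {g : G} {x : X} (hx : x ∈ p.dom g⁻¹) :
    p.act g⁻¹ (p.act g x) = x := by
  have h := act_act_inv p (g := g⁻¹) hx
  rwa [inv_inv] at h

lemma act_comp (p : SetPA G X) {a b : G} {x : X} (hx : x ∈ p.dom a⁻¹)
    (hy : p.act a x ∈ p.dom b⁻¹) :
    x ∈ p.dom (b * a)⁻¹ ∧ p.act b (p.act a x) = p.act (b * a) x := by
  have hmem : x ∈ p.act a⁻¹ '' (p.dom a ∩ p.dom b⁻¹) :=
    ⟨p.act a x, ⟨(p.bijOn a).mapsTo hx, hy⟩, act_inv_act p hx⟩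
  refine ⟨?_, p.compat b a x (by simpa [inv_inv] using hmem)⟩
  have h2 := p.image_inter a⁻¹ b⁻¹
  rw [inv_inv] at h2
  rw [h2] at hmem
  rw [mul_inv_rev]
  exact hmem.2

/-- The equivalence relation on `G × X` used to build the enveloping action. -/
def rel (p : SetPA G X) (u v : G × X) : Prop :=
  u.2 ∈ p.dom (u.1⁻¹ * v.1) ∧ p.act (v.1⁻¹ * u.1) u.2 = v.2

lemma rel_refl (p : SetPA G X) (u : G × X) : rel p u u := by
  simp [rel, p.dom_one, p.act_one]

lemma rel_symm (p : SetPA G X) {u v : G × X} (h : rel p u v) : rel p v u := by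
  obtain ⟨hd, ha⟩ := h
  have hd' : u.2 ∈ p.dom (v.1⁻¹ * u.1)⁻¹ := by rwa [mul_inv_rev, inv_inv]
  constructor
  · rw [← ha]
    exact (p.bijOn (v.1⁻¹ * u.1)).mapsTo hd'
  · rw [← ha]
    have := act_inv_act p hd'
    rwa [mul_inv_rev, inv_inv] at this

lemma rel_trans (p : SetPA G X) {u v w : G × X} (h1 : rel p u v) (h2 : rel p v w) :
    rel p u w := by
  obtain ⟨hd1, ha1⟩ := h1
  obtain ⟨hd2, ha2⟩ := h2
  have hd1' : u.2 ∈ p.dom (v.1⁻¹ * u.1)⁻¹ := by rwa [mul_inv_rev, inv_inv]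
  have hd2' : p.act (v.1⁻¹ * u.1) u.2 ∈ p.dom (w.1⁻¹ * v.1)⁻¹ := by
    rw [ha1, mul_inv_rev, inv_inv]; exact hd2
  obtain ⟨hdom, hact⟩ := act_comp p hd1' hd2'
  constructor
  · have : (w.1⁻¹ * v.1 * (v.1⁻¹ * u.1))⁻¹ = u.1⁻¹ * w.1 := by group
    rwa [this] at hdom
  · have : w.1⁻¹ * v.1 * (v.1⁻¹ * u.1) = w.1⁻¹ * u.1 := by group
    rw [this] at hact
    rw [← hact, ha1, ha2]

/-- The setoid on `G × X` for the enveloping action. -/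
def sd (p : SetPA G X) : Setoid (G × X) :=
  ⟨rel p, rel_refl p, rel_symm p, rel_trans p⟩

lemma shift_resp (p : SetPA G X) (g : G) :
    ∀ u v : G × X, rel p u v → rel p (g * u.1, u.2) (g * v.1, v.2) := by
  rintro u v ⟨hd, ha⟩
  constructor
  · simpa [mul_inv_rev, mul_assoc] using hd
  · have : (g * v.1)⁻¹ * (g * u.1) = v.1⁻¹ * u.1 := by group
    rw [this]; exact ha

/-- Translation by `g` on the quotient. -/
def shift (p : SetPA G X) (g : G) : Quotient (sd p) → Quotient (sd p) :=
  Quotient.map (fun u => (g * u.1, u.2)) (shift_resp p g)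

lemma shift_mk (p : SetPA G X) (g : G) (u : G × X) :
    shift p g (Quotient.mk (sd p) u) = Quotient.mk (sd p) (g * u.1, u.2) := rfl

lemma eq_mk_iff (p : SetPA G X) (u v : G × X) :
    Quotient.mk (sd p) u = Quotient.mk (sd p) v ↔ rel p u v :=
  ⟨Quotient.exact, fun h => Quotient.sound h⟩

/-- Translation by `g` as an equivalence. -/
def shiftE (p : SetPA G X) (g : G) : Quotient (sd p) ≃ Quotient (sd p) where
  toFun := shift p g
  invFun := shift p g⁻¹
  left_inv := by
    rintro ⟨u⟩
    show shift p g⁻¹ (shift p g (Quotient.mk (sd p) u)) = Quotient.mk (sd p) u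
    rw [shift_mk, shift_mk, inv_mul_cancel_left]
  right_inv := by
    rintro ⟨u⟩
    show shift p g (shift p g⁻¹ (Quotient.mk (sd p) u)) = Quotient.mk (sd p) u
    rw [shift_mk, shift_mk, mul_inv_cancel_left]

lemma shiftE_one (p : SetPA G X) : shiftE p 1 = Equiv.refl _ := by
  ext q
  induction q using Quotient.ind with
  | _ u => show shift p 1 (Quotient.mk (sd p) u) = Quotient.mk (sd p) u
           rw [shift_mk, one_mul]

lemma shiftE_mul (p : SetPA G X) (g h : G) :
    shiftE p (g * h) = (shiftE p h).trans (shiftE p g) := by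
  ext q
  induction q using Quotient.ind with
  | _ u =>
    show shift p (g * h) (Quotient.mk (sd p) u)
        = shift p g (shift p h (Quotient.mk (sd p) u))
    rw [shift_mk, shift_mk, shift_mk, mul_assoc]

/-- The inclusion of `X` into the quotient. -/
def incl (p : SetPA G X) (x : X) : Quotient (sd p) := Quotient.mk (sd p) (1, x)

lemma incl_inj (p : SetPA G X) : Function.Injective (incl p) := by
  intro x y h
  obtain ⟨_, ha⟩ := (eq_mk_iff p _ _).mp h
  simpa [p.act_one] using ha

lemma incl_dom_eq (p : SetPA G X) (g : G) :
    incl p '' p.dom g = shift p g '' Set.range (incl p) ∩ Set.range (incl p) := by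
  ext q
  constructor
  · rintro ⟨x, hx, rfl⟩
    refine ⟨⟨incl p (p.act g⁻¹ x), ⟨_, rfl⟩, ?_⟩, ⟨x, rfl⟩⟩
    show shift p g (Quotient.mk (sd p) (1, p.act g⁻¹ x)) = incl p x
    rw [shift_mk]
    apply Quotient.sound
    refine ⟨?_, ?_⟩
    · show p.act g⁻¹ x ∈ p.dom ((g * 1)⁻¹ * 1)
      have hx' : x ∈ p.dom (g⁻¹)⁻¹ := by rwa [inv_inv]
      simpa [mul_one] using (p.bijOn g⁻¹).mapsTo hx'
    · show p.act (1⁻¹ * (g * 1)) (p.act g⁻¹ x) = x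
      simpa [mul_one] using act_act_inv p hx
  · rintro ⟨⟨q', ⟨y, rfl⟩, hq⟩, x, rfl⟩
    have h : shift p g (Quotient.mk (sd p) (1, y)) = Quotient.mk (sd p) (1, x) := hq
    rw [shift_mk] at h
    obtain ⟨hd, ha⟩ := (eq_mk_iff p _ _).mp h
    simp only [mul_one] at hd ha
    have hy : y ∈ p.dom g⁻¹ := by simpa using hd
    have hx : x ∈ p.dom g := by
      have := (p.bijOn g).mapsTo hy
      rwa [show p.act g y = x by simpa using ha] at this
    exact ⟨x, hx, rfl⟩

lemma incl_act (p : SetPA G X) (g : G) (x : X) (hx : x ∈ p.dom g⁻¹) :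
    incl p (p.act g x) = shift p g (incl p x) := by
  show Quotient.mk (sd p) (1, p.act g x) = shift p g (Quotient.mk (sd p) (1, x))
  rw [shift_mk]
  apply Quotient.sound
  refine ⟨?_, ?_⟩
  · show p.act g x ∈ p.dom (1⁻¹ * (g * 1))
    simpa [mul_one] using (p.bijOn g).mapsTo hx
  · show p.act ((g * 1)⁻¹ * 1) (p.act g x) = x
    simpa [mul_one] using act_inv_act p hx

lemma iUnion_shift (p : SetPA G X) :
    (⋃ g : G, shift p g '' Set.range (incl p)) = Set.univ := by
  ext q
  simp only [Set.mem_iUnion, Set.mem_univ, iff_true]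
  induction q using Quotient.ind with
  | _ u =>
    refine ⟨u.1, Quotient.mk (sd p) (1, u.2), ⟨u.2, rfl⟩, ?_⟩
    rw [shift_mk, mul_one]

end EnvAux

/-- Every partial action of a group on a quiver admits an enveloping action. -/
theorem stmt5 (G : Type) [Group G] (Γ : Quiv) (pa : QuivPA G Γ) :
    ∃ (Q : Quiv) (β : QuivGA G Q) (i : QuivHom Γ Q), IsEnvelopingQ pa β i := by
  classical
  open EnvAux in
  refine ⟨{ V := Quotient (sd pa.va), E := Quotient (sd pa.ea),
            s := Quotient.map (fun u => (u.1, Γ.s u.2)) ?_,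
            t := Quotient.map (fun u => (u.1, Γ.t u.2)) ?_ },
          { actV := shiftE pa.va, actE := shiftE pa.ea,
            actV_one := shiftE_one pa.va, actE_one := shiftE_one pa.ea,
            actV_mul := shiftE_mul pa.va, actE_mul := shiftE_mul pa.ea,
            act_s := ?_, act_t := ?_ },
          { onV := incl pa.va, onE := incl pa.ea, map_s := fun e => rfl,
            map_t := fun e => rfl },
          incl_inj pa.va, incl_inj pa.ea,
          incl_dom_eq pa.va, incl_dom_eq pa.ea,
          fun g x hx => incl_act pa.va g x hx,
          fun g e he => incl_act pa.ea g e he,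
          iUnion_shift pa.va, iUnion_shift pa.ea⟩
  · rintro u v ⟨hd, ha⟩
    refine ⟨pa.mem_s _ _ hd, ?_⟩
    have hd' : u.2 ∈ pa.ea.dom (v.1⁻¹ * u.1)⁻¹ := by rwa [mul_inv_rev, inv_inv]
    rw [← pa.act_s _ _ hd', ha]
  · rintro u v ⟨hd, ha⟩
    refine ⟨pa.mem_t _ _ hd, ?_⟩
    have hd' : u.2 ∈ pa.ea.dom (v.1⁻¹ * u.1)⁻¹ := by rwa [mul_inv_rev, inv_inv]
    rw [← pa.act_t _ _ hd', ha]
  · intro g e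
    induction e using Quotient.ind with
    | _ u => rfl
  · intro g e
    induction e using Quotient.ind with
    | _ u => rfl
end

section
/- Any two enveloping actions of a partial action of a group G on a quiver Γ are isomorphic: if (Q, β) and (Q', β') are both enveloping actions of (Γ, α), then there is a quiver isomorphism Φ : Q → Q' that is G-equivariant (Φ ∘ β_g = β'_g ∘ Φ for all g ∈ G) and restricts to the identity on Γ. -/
/-- Auxiliary packaging of one set-level enveloping action datum over a fixed
partial action `pa`. -/
structure EnvData {G : Type} [Group G] {X : Type} (pa : SetPA G X) (Y : Type) where
  b : G → Y ≃ Y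
  b_one : b 1 = Equiv.refl Y
  b_mul : ∀ g h, b (g * h) = (b h).trans (b g)
  j : X → Y
  inj : Function.Injective j
  dom_eq : ∀ g, j '' pa.dom g = ⇑(b g) '' Set.range j ∩ Set.range j
  jcompat : ∀ g x, x ∈ pa.dom g⁻¹ → j (pa.act g x) = b g (j x)
  cover : (⋃ g : G, ⇑(b g) '' Set.range j) = Set.univ

namespace EnvData

variable {G : Type} [Group G] {X Y Y' : Type} {pa : SetPA G X}

lemma exists_rep (d : EnvData pa Y) (y : Y) : ∃ g x, d.b g (d.j x) = y := by
  have hy : y ∈ ⋃ g : G, ⇑(d.b g) '' Set.range d.j := by rw [d.cover]; trivial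
  simp only [Set.mem_iUnion, Set.mem_image, Set.mem_range] at hy
  obtain ⟨g, _, ⟨x, rfl⟩, hy⟩ := hy
  exact ⟨g, x, hy⟩

lemma key (d : EnvData pa Y) {g : G} {x y : X} (h : d.b g (d.j x) = d.j y) :
    x ∈ pa.dom g⁻¹ ∧ pa.act g x = y := by
  have hmem : d.j y ∈ d.j '' pa.dom g := by
    rw [d.dom_eq]; exact ⟨⟨d.j x, ⟨x, rfl⟩, h⟩, ⟨y, rfl⟩⟩
  obtain ⟨y', hy', hjy⟩ := hmem
  have hy : y ∈ pa.dom g := d.inj hjy ▸ hy'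
  obtain ⟨x', hx', hax⟩ := (pa.bijOn g).surjOn hy
  have h2 : d.j y = d.b g (d.j x') := by
    rw [← hax]; exact d.jcompat g x' hx'
  have hx : x = x' := d.inj ((d.b g).injective (h.trans h2))
  exact ⟨hx ▸ hx', hx ▸ hax⟩

noncomputable def map (d : EnvData pa Y) (d' : EnvData pa Y') (y : Y) : Y' :=
  d'.b (d.exists_rep y).choose (d'.j (d.exists_rep y).choose_spec.choose)

lemma map_spec (d : EnvData pa Y) (d' : EnvData pa Y') (g : G) (x : X) :
    d.map d' (d.b g (d.j x)) = d'.b g (d'.j x) := by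
  set y := d.b g (d.j x) with hy
  have h0 : d.b (d.exists_rep y).choose (d.j (d.exists_rep y).choose_spec.choose) = y :=
    (d.exists_rep y).choose_spec.choose_spec
  set g0 := (d.exists_rep y).choose with hg0
  set x0 := (d.exists_rep y).choose_spec.choose with hx0
  have h1 : d.b (g⁻¹ * g0) (d.j x0) = d.j x := by
    rw [d.b_mul, Equiv.trans_apply, h0, hy, ← Equiv.trans_apply, ← d.b_mul,
      inv_mul_cancel, d.b_one]
    rfl
  obtain ⟨hdom, hact⟩ := d.key h1
  have h2 : d'.j x = d'.b (g⁻¹ * g0) (d'.j x0) := by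
    rw [← hact]; exact d'.jcompat _ x0 hdom
  show d'.b g0 (d'.j x0) = d'.b g (d'.j x)
  rw [h2, ← Equiv.trans_apply, ← d'.b_mul, mul_inv_cancel_left]

lemma map_id (d : EnvData pa Y) (d' : EnvData pa Y') (x : X) :
    d.map d' (d.j x) = d'.j x := by
  have h := d.map_spec d' 1 x
  rw [d.b_one, d'.b_one] at h
  simpa using h

lemma map_comm (d : EnvData pa Y) (d' : EnvData pa Y') (h : G) (y : Y) :
    d.map d' (d.b h y) = d'.b h (d.map d' y) := by
  obtain ⟨g, x, rfl⟩ := d.exists_rep y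
  rw [← Equiv.trans_apply, ← d.b_mul, d.map_spec, d.map_spec, d'.b_mul, Equiv.trans_apply]

lemma map_inv (d : EnvData pa Y) (d' : EnvData pa Y') (y : Y) :
    d'.map d (d.map d' y) = y := by
  obtain ⟨g, x, rfl⟩ := d.exists_rep y
  rw [d.map_spec, d'.map_spec]

lemma map_bijective (d : EnvData pa Y) (d' : EnvData pa Y') :
    Function.Bijective (d.map d') :=
  Function.bijective_iff_has_inverse.mpr
    ⟨d'.map d, fun y => d.map_inv d' y, fun y => d'.map_inv d y⟩

end EnvData

/-- Any two enveloping actions of a partial action of a group on a quiver are isomorphic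
via a `G`-equivariant quiver isomorphism restricting to the identity on `Γ`. -/
theorem stmt6 (G : Type) [Group G] (Γ : Quiv) (pa : QuivPA G Γ)
    (Q : Quiv) (β : QuivGA G Q) (i : QuivHom Γ Q) (h : IsEnvelopingQ pa β i)
    (Q' : Quiv) (β' : QuivGA G Q') (i' : QuivHom Γ Q') (h' : IsEnvelopingQ pa β' i') :
    ∃ Φ : QuivHom Q Q', Function.Bijective Φ.onV ∧ Function.Bijective Φ.onE ∧
      (∀ g v, Φ.onV (β.actV g v) = β'.actV g (Φ.onV v)) ∧
      (∀ g e, Φ.onE (β.actE g e) = β'.actE g (Φ.onE e)) ∧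
      (∀ x, Φ.onV (i.onV x) = i'.onV x) ∧ (∀ e, Φ.onE (i.onE e) = i'.onE e) := by
  obtain ⟨hiV, hiE, hdomV, hdomE, hcompV, hcompE, hcovV, hcovE⟩ := h
  obtain ⟨hiV', hiE', hdomV', hdomE', hcompV', hcompE', hcovV', hcovE'⟩ := h'
  let dV : EnvData pa.va Q.V :=
    ⟨β.actV, β.actV_one, β.actV_mul, i.onV, hiV, hdomV, hcompV, hcovV⟩
  let dE : EnvData pa.ea Q.E :=
    ⟨β.actE, β.actE_one, β.actE_mul, i.onE, hiE, hdomE, hcompE, hcovE⟩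
  let dV' : EnvData pa.va Q'.V :=
    ⟨β'.actV, β'.actV_one, β'.actV_mul, i'.onV, hiV', hdomV', hcompV', hcovV'⟩
  let dE' : EnvData pa.ea Q'.E :=
    ⟨β'.actE, β'.actE_one, β'.actE_mul, i'.onE, hiE', hdomE', hcompE', hcovE'⟩
  refine ⟨⟨dV.map dV', dE.map dE', ?_, ?_⟩, dV.map_bijective dV', dE.map_bijective dE',
    fun g v => dV.map_comm dV' g v, fun g e => dE.map_comm dE' g e,
    fun x => dV.map_id dV' x, fun e => dE.map_id dE' e⟩
  · intro e
    obtain ⟨g, a, rfl⟩ := dE.exists_rep e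
    have hs : Q.s (β.actE g (i.onE a)) = dV.b g (dV.j (Γ.s a)) := by
      show Q.s (β.actE g (i.onE a)) = β.actV g (i.onV (Γ.s a))
      rw [β.act_s, i.map_s]
    show Q'.s (dE.map dE' (dE.b g (dE.j a))) = dV.map dV' (Q.s (β.actE g (i.onE a)))
    rw [dE.map_spec, hs, dV.map_spec]
    show Q'.s (β'.actE g (i'.onE a)) = β'.actV g (i'.onV (Γ.s a))
    rw [β'.act_s, i'.map_s]
  · intro e
    obtain ⟨g, a, rfl⟩ := dE.exists_rep e
    have hs : Q.t (β.actE g (i.onE a)) = dV.b g (dV.j (Γ.t a)) := by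
      show Q.t (β.actE g (i.onE a)) = β.actV g (i.onV (Γ.t a))
      rw [β.act_t, i.map_t]
    show Q'.t (dE.map dE' (dE.b g (dE.j a))) = dV.map dV' (Q.t (β.actE g (i.onE a)))
    rw [dE.map_spec, hs, dV.map_spec]
    show Q'.t (β'.actE g (i'.onE a)) = β'.actV g (i'.onV (Γ.t a))
    rw [β'.act_t, i'.map_t]
end

section
/- Let (X, α) be a set-theoretic partial action of a group G on a set X. Then there exists a set Y with a global G-action β, an injection i : X → Y, such that Xᵍ = i⁻¹(β_g(i(X))) with α_g induced by β_g, and Y = ⋃_{g∈G} β_g(i(X)); moreover any two such enveloping actions are isomorphic via a G-equivariant bijection fixing X. -/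
/-- `(Y, act)` with injection `i : X → Y` is an enveloping (global) action of the
set-theoretic partial action `pa` of `G` on `X`: `act` is a global `G`-action,
`pa.dom g = i⁻¹(act g (i(X)))` with `pa.act` induced by `act`, and `Y = ⋃ g, act g (i(X))`. -/
def IsEnvelopingSet {G X : Type} [Group G] (pa : SetPA G X) (Y : Type)
    (act : G → Y ≃ Y) (i : X → Y) : Prop :=
  (act 1 = Equiv.refl Y) ∧ (∀ g h, act (g * h) = (act h).trans (act g)) ∧
  Function.Injective i ∧
  (∀ g, pa.dom g = i ⁻¹' (⇑(act g) '' Set.range i)) ∧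
  (∀ g x, x ∈ pa.dom g⁻¹ → i (pa.act g x) = act g (i x)) ∧
  (⋃ g : G, ⇑(act g) '' Set.range i) = Set.univ

namespace SetPAProof

variable {G X : Type} [Group G]

lemma image_dom (pa : SetPA G X) (g : G) : pa.act g '' pa.dom g⁻¹ = pa.dom g :=
  (pa.bijOn g).image_eq

lemma act_mem (pa : SetPA G X) (g : G) {x : X} (hx : x ∈ pa.dom g⁻¹) :
    pa.act g x ∈ pa.dom g := (pa.bijOn g).mapsTo hx

lemma act_inv_act (pa : SetPA G X) (g : G) {x : X} (hx : x ∈ pa.dom g⁻¹) :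
    pa.act g⁻¹ (pa.act g x) = x := by
  have hmem : x ∈ pa.act g⁻¹ '' (pa.dom g ∩ pa.dom g⁻¹⁻¹) := by
    rw [inv_inv, Set.inter_self]
    have h := image_dom pa g⁻¹
    rw [inv_inv] at h
    rw [h]; exact hx
  have h := pa.compat g⁻¹ g x hmem
  rw [h, inv_mul_cancel, pa.act_one, id]

lemma act_act_inv (pa : SetPA G X) (g : G) {x : X} (hx : x ∈ pa.dom g) :
    pa.act g (pa.act g⁻¹ x) = x := by
  have h := act_inv_act pa g⁻¹ (x := x) (by rwa [inv_inv])
  rwa [inv_inv] at h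

lemma act_inv_mem (pa : SetPA G X) (g : G) {x : X} (hx : x ∈ pa.dom g) :
    pa.act g⁻¹ x ∈ pa.dom g⁻¹ := act_mem pa g⁻¹ (by rwa [inv_inv])

/-- The relation on `G × X` defining the enveloping quotient. -/
def rel (pa : SetPA G X) (p q : G × X) : Prop :=
  p.2 ∈ pa.dom (p.1⁻¹ * q.1) ∧ pa.act (q.1⁻¹ * p.1) p.2 = q.2

lemma rel_refl (pa : SetPA G X) (p : G × X) : rel pa p p := by
  constructor
  · rw [inv_mul_cancel, pa.dom_one]; trivial
  · rw [inv_mul_cancel, pa.act_one, id]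

lemma rel_symm {pa : SetPA G X} {p q : G × X} (h : rel pa p q) : rel pa q p := by
  obtain ⟨h1, h2⟩ := h
  have hinv : (q.1⁻¹ * p.1)⁻¹ = p.1⁻¹ * q.1 := by group
  constructor
  · rw [← h2]; exact act_mem pa _ (by rw [hinv]; exact h1)
  · rw [← h2]
    have h3 := act_inv_act pa (q.1⁻¹ * p.1) (x := p.2) (by rw [hinv]; exact h1)
    rwa [hinv] at h3

lemma rel_trans {pa : SetPA G X} {p q r : G × X}
    (hpq : rel pa p q) (hqr : rel pa q r) : rel pa p r := by
  obtain ⟨g, x⟩ := p; obtain ⟨h, y⟩ := q; obtain ⟨k, z⟩ := r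
  obtain ⟨h1, h2⟩ := hpq; obtain ⟨h3, h4⟩ := hqr
  simp only at h1 h2 h3 h4 ⊢
  have hinv : (g⁻¹ * h)⁻¹ = h⁻¹ * g := by group
  have hinv2 : (h⁻¹ * g)⁻¹ = g⁻¹ * h := by group
  have hinv3 : (h⁻¹ * k)⁻¹ = k⁻¹ * h := by group
  have hinv4 : (k⁻¹ * h)⁻¹ = h⁻¹ * k := by group
  have hy_dom : y ∈ pa.dom (h⁻¹ * g) := by
    rw [← h2]; exact act_mem pa _ (by rw [hinv2]; exact h1)
  have hx_eq : pa.act (g⁻¹ * h) y = x := by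
    rw [← h2]
    have h5 := act_inv_act pa (h⁻¹ * g) (x := x) (by rw [hinv2]; exact h1)
    rwa [hinv2] at h5
  have himg := pa.image_inter (g⁻¹ * h) (h⁻¹ * k)
  have hxmem : x ∈ pa.dom (g⁻¹ * h) ∩ pa.dom (g⁻¹ * h * (h⁻¹ * k)) := by
    rw [← himg]
    exact ⟨y, ⟨by rw [hinv]; exact hy_dom, h3⟩, hx_eq⟩
  have hk : g⁻¹ * h * (h⁻¹ * k) = g⁻¹ * k := by group
  rw [hk] at hxmem
  refine ⟨hxmem.2, ?_⟩
  have hcomp := pa.compat (k⁻¹ * h) (h⁻¹ * g) x ?_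
  · rw [h2] at hcomp
    have hk2 : k⁻¹ * h * (h⁻¹ * g) = k⁻¹ * g := by group
    rw [hk2] at hcomp
    rw [← hcomp]; exact h4
  · refine ⟨y, ⟨hy_dom, ?_⟩, ?_⟩
    · rw [hinv4]; exact h3
    · rw [hinv2]; exact hx_eq

/-- The setoid on `G × X`. -/
def paSetoid (pa : SetPA G X) : Setoid (G × X) :=
  ⟨rel pa, ⟨rel_refl pa, rel_symm, rel_trans⟩⟩

/-- The enveloping space. -/
def Env (pa : SetPA G X) : Type := Quotient (paSetoid pa)

lemma envAct_aux (pa : SetPA G X) (g : G) :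
    ∀ p q : G × X, rel pa p q → rel pa (g * p.1, p.2) (g * q.1, q.2) := by
  rintro ⟨h, x⟩ ⟨k, y⟩ ⟨h1, h2⟩
  simp only at h1 h2
  constructor
  · simp only
    have e : (g * h)⁻¹ * (g * k) = h⁻¹ * k := by group
    rw [e]; exact h1
  · simp only
    have e : (g * k)⁻¹ * (g * h) = k⁻¹ * h := by group
    rw [e]; exact h2

/-- The global action on the enveloping space. -/
def envAct (pa : SetPA G X) (g : G) : Env pa ≃ Env pa where
  toFun := Quotient.map (fun p => (g * p.1, p.2)) (envAct_aux pa g)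
  invFun := Quotient.map (fun p => (g⁻¹ * p.1, p.2)) (envAct_aux pa g⁻¹)
  left_inv := by
    refine fun y => Quotient.inductionOn y ?_
    rintro ⟨h, x⟩
    show Quotient.mk _ _ = Quotient.mk _ _
    simp [inv_mul_cancel_left]
  right_inv := by
    refine fun y => Quotient.inductionOn y ?_
    rintro ⟨h, x⟩
    show Quotient.mk _ _ = Quotient.mk _ _
    simp [mul_inv_cancel_left]

/-- The embedding into the enveloping space. -/
def envI (pa : SetPA G X) : X → Env pa := fun x => Quotient.mk (paSetoid pa) (1, x)

lemma envAct_mk (pa : SetPA G X) (g h : G) (x : X) :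
    envAct pa g (Quotient.mk (paSetoid pa) (h, x)) = Quotient.mk (paSetoid pa) (g * h, x) :=
  rfl

lemma env_isEnveloping (pa : SetPA G X) :
    IsEnvelopingSet pa (Env pa) (envAct pa) (envI pa) := by
  refine ⟨?_, ?_, ?_, ?_, ?_, ?_⟩
  · ext y
    refine Quotient.inductionOn y ?_
    rintro ⟨h, x⟩
    show Quotient.mk _ _ = Quotient.mk _ _
    simp
  · intro g h
    ext y
    refine Quotient.inductionOn y ?_
    rintro ⟨k, x⟩
    show Quotient.mk _ _ = Quotient.mk _ _
    simp [mul_assoc]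
  · intro x y h
    have h2 := (Quotient.exact h).2
    simpa [pa.act_one] using h2
  · intro g
    ext x
    simp only [Set.mem_preimage, Set.mem_image, Set.mem_range]
    constructor
    · intro hx
      refine ⟨envI pa (pa.act g⁻¹ x), ⟨pa.act g⁻¹ x, rfl⟩, ?_⟩
      show Quotient.mk _ (g * 1, _) = Quotient.mk _ (1, x)
      apply Quotient.sound
      refine ⟨?_, ?_⟩
      · simp only [mul_one, mul_inv_rev]
        simpa using act_inv_mem pa g hx
      · simp only [mul_one, inv_one, one_mul]
        exact act_act_inv pa g hx
    · rintro ⟨y, ⟨z, rfl⟩, heq⟩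
      have h2 := Quotient.exact heq
      obtain ⟨ha, hb⟩ := h2
      simp only [mul_one, inv_one, one_mul, mul_inv_rev] at ha hb
      rw [← hb]
      exact act_mem pa g (by simpa using ha)
  · intro g x hx
    show Quotient.mk _ (1, pa.act g x) = Quotient.mk _ (g * 1, x)
    apply Quotient.sound
    refine ⟨?_, ?_⟩
    · simp only [mul_one, inv_one, one_mul]
      exact act_mem pa g hx
    · simp only [mul_one, mul_inv_rev, inv_one, one_mul]
      exact act_inv_act pa g hx
  · ext y
    simp only [Set.mem_iUnion, Set.mem_image, Set.mem_range, Set.mem_univ, iff_true]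
    refine Quotient.inductionOn y ?_
    rintro ⟨g, x⟩
    refine ⟨g, envI pa x, ⟨x, rfl⟩, ?_⟩
    show Quotient.mk _ (g * 1, x) = Quotient.mk _ (g, x)
    simp

section Uniqueness

variable {pa : SetPA G X} {Y Y' : Type} {act : G → Y ≃ Y} {i : X → Y}
  {act' : G → Y' ≃ Y'} {i' : X → Y'}

lemma env_act_act (h2 : ∀ g h : G, act (g * h) = (act h).trans (act g)) (g k : G) (y : Y) :
    act g (act k y) = act (g * k) y := by rw [h2]; rfl

lemma env_key (he : IsEnvelopingSet pa Y act i) (g : G) (x x' : X) :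
    i x' = act g (i x) ↔ x ∈ pa.dom g⁻¹ ∧ pa.act g x = x' := by
  obtain ⟨h1, h2, h3, h4, h5, h6⟩ := he
  constructor
  · intro he
    have hx : act g⁻¹ (i x') = i x := by
      rw [he, env_act_act h2, inv_mul_cancel, h1]; rfl
    have hdom : x ∈ pa.dom g⁻¹ := by
      rw [h4]; exact ⟨i x', ⟨x', rfl⟩, hx⟩
    refine ⟨hdom, h3 ?_⟩
    rw [h5 g x hdom]; exact he.symm
  · rintro ⟨hdom, rfl⟩
    exact h5 g x hdom

lemma env_surj (he : IsEnvelopingSet pa Y act i) (y : Y) :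
    ∃ g x, act g (i x) = y := by
  have hy : y ∈ ⋃ g : G, ⇑(act g) '' Set.range i := he.2.2.2.2.2 ▸ Set.mem_univ y
  simp only [Set.mem_iUnion, Set.mem_image, Set.mem_range] at hy
  obtain ⟨g, z, ⟨x, rfl⟩, hz⟩ := hy
  exact ⟨g, x, hz⟩

lemma env_transfer (he : IsEnvelopingSet pa Y act i) (he' : IsEnvelopingSet pa Y' act' i')
    {g h : G} {x x' : X} (e : act g (i x) = act h (i x')) :
    act' g (i' x) = act' h (i' x') := by
  have h1 := he.1
  have h2 := he.2.1
  have key : i x' = act (h⁻¹ * g) (i x) := by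
    have e2 : act h⁻¹ (act g (i x)) = act h⁻¹ (act h (i x')) := by rw [e]
    rw [env_act_act h2, env_act_act h2, inv_mul_cancel, h1] at e2
    exact e2.symm
  obtain ⟨hdom, hact⟩ := (env_key he (h⁻¹ * g) x x').mp key
  have key' : i' x' = act' (h⁻¹ * g) (i' x) := (env_key he' (h⁻¹ * g) x x').mpr ⟨hdom, hact⟩
  calc act' g (i' x) = act' (h * (h⁻¹ * g)) (i' x) := by rw [mul_inv_cancel_left]
    _ = act' h (act' (h⁻¹ * g) (i' x)) := (env_act_act he'.2.1 _ _ _).symm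
    _ = act' h (i' x') := by rw [← key']

end Uniqueness

end SetPAProof

open SetPAProof in
/-- Every set-theoretic partial action of a group has an enveloping (global) action,
and any two enveloping actions are isomorphic via a `G`-equivariant bijection fixing
`X`. -/
theorem stmt16 (G X : Type) [Group G] (pa : SetPA G X) :
    (∃ (Y : Type) (act : G → Y ≃ Y) (i : X → Y), IsEnvelopingSet pa Y act i) ∧
    (∀ (Y : Type) (act : G → Y ≃ Y) (i : X → Y), IsEnvelopingSet pa Y act i →
      ∀ (Y' : Type) (act' : G → Y' ≃ Y') (i' : X → Y'), IsEnvelopingSet pa Y' act' i' →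
      ∃ Φ : Y → Y', Function.Bijective Φ ∧ (∀ x, Φ (i x) = i' x) ∧
        ∀ g y, Φ (act g y) = act' g (Φ y)) := by
  constructor
  · exact ⟨Env pa, envAct pa, envI pa, env_isEnveloping pa⟩
  · intro Y act i he Y' act' i' he'
    choose f₁ f₂ hf using env_surj he
    choose g₁ g₂ hg using env_surj he'
    set Φ : Y → Y' := fun y => act' (f₁ y) (i' (f₂ y)) with hΦ
    set Ψ : Y' → Y := fun y => act (g₁ y) (i (g₂ y)) with hΨ
    have K : ∀ (g : G) (x : X), Φ (act g (i x)) = act' g (i' x) := fun g x =>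
      env_transfer he he' (by rw [hf])
    have K' : ∀ (g : G) (x : X), Ψ (act' g (i' x)) = act g (i x) := fun g x =>
      env_transfer he' he (by rw [hg])
    have hli : Function.LeftInverse Ψ Φ := by
      intro y
      have : Φ y = Φ (act (f₁ y) (i (f₂ y))) := by rw [hf]
      rw [this, K, K', hf]
    have hri : Function.RightInverse Ψ Φ := by
      intro y
      have : Ψ y = Ψ (act' (g₁ y) (i' (g₂ y))) := by rw [hg]
      rw [this, K', K, hg]
    refine ⟨Φ, Function.bijective_iff_has_inverse.mpr ⟨Ψ, hli, hri⟩, ?_, ?_⟩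
    · intro x
      have e1 : i x = act 1 (i x) := by rw [he.1]; rfl
      rw [e1, K, he'.1]; rfl
    · intro g y
      have e1 : act g y = act (g * f₁ y) (i (f₂ y)) := by
        rw [← env_act_act he.2.1, hf]
      rw [e1, K, ← env_act_act he'.2.1]
end
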